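/- Let δ > 0, γ > 0, and define U(t,S,y,X) = 1 - e^{-γX/δ}·Q(t,y,S) for a positive C² function Q (with δ = δ(t) = e^{-r(T-t)}). Then A := U_y - (1+λ)S U_X = -e^{-γX/δ}(Q_y + γ(1+λ)S Q/δ), B := -U_y + (1-λ)S U_X = -e^{-γX/δ}(-Q_y - γ(1-λ)S Q/δ), and C := -U_t - μS U_S - (σ²S²/2)U_{SS} - rX U_X = -e^{-γX/δ}(-Q_t - μS Q_S - (σ²S²/2)Q_{SS}). Consequently max{A,B,C} = 0 if and only if min{Q_y + γ(1+λ)SQ/δ, -Q_y - γ(1-λ)SQ/δ, -Q_t - μSQ_S - (σ²S²/2)Q_{SS}} = 0. -/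
import Mathlib

private lemma max_mul_min_of_neg {c x y : ℝ} (hc : c < 0) :
    max (c*x) (c*y) = c * min x y := by
  rcases le_total x y with h | h
  · rw [min_eq_left h, max_eq_left (by nlinarith)]
  · rw [min_eq_right h, max_eq_right (by nlinarith)]

/-- CARA dimension reduction: with `U t S y X = 1 - exp(-γX/δ t) * Q t y S`,
`δ t = exp(-r(T-t))`, the QVI terms `A`, `B`, `C` factor as
`-exp(-γX/δ t)` times expressions in `Q` alone, and `max{A,B,C} = 0` iff the
reduced `min{...} = 0`. -/
theorem cara_dimension_reduction (r μ σ γ lam T : ℝ)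
    (hγ : 0 < γ) (hσ : 0 < σ) (hlam0 : 0 < lam) (hlam1 : lam < 1)
    (Q : ℝ → ℝ → ℝ → ℝ)
    (hQpos : ∀ t y S, 0 < Q t y S)
    (hQt : ∀ y S, Differentiable ℝ fun t => Q t y S)
    (hQy : ∀ t S, Differentiable ℝ fun y => Q t y S)
    (hQS : ∀ t y, Differentiable ℝ fun S => Q t y S)
    (hQSS : ∀ t y, Differentiable ℝ (deriv fun S => Q t y S))
    (U : ℝ → ℝ → ℝ → ℝ → ℝ)
    (δ : ℝ → ℝ) (hδ : ∀ t, δ t = Real.exp (-r * (T - t)))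
    (hU : ∀ t S y X, U t S y X = 1 - Real.exp (-γ * X / δ t) * Q t y S) :
    ∀ t S y X : ℝ, 0 < S →
      let A := deriv (fun y' => U t S y' X) y - (1 + lam) * S * deriv (fun X' => U t S y X') X
      let B := -deriv (fun y' => U t S y' X) y + (1 - lam) * S * deriv (fun X' => U t S y X') X
      let C := -deriv (fun t' => U t' S y X) t - μ * S * deriv (fun S' => U t S' y X) S
        - σ^2 * S^2 / 2 * deriv (deriv fun S' => U t S' y X) S
        - r * X * deriv (fun X' => U t S y X') X
      let a := deriv (fun y' => Q t y' S) y + γ * (1 + lam) * S * Q t y S / δ t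
      let b := -deriv (fun y' => Q t y' S) y - γ * (1 - lam) * S * Q t y S / δ t
      let c := -deriv (fun t' => Q t' y S) t - μ * S * deriv (fun S' => Q t y S') S
        - σ^2 * S^2 / 2 * deriv (deriv fun S' => Q t y S') S
      A = -Real.exp (-γ * X / δ t) * a ∧
      B = -Real.exp (-γ * X / δ t) * b ∧
      C = -Real.exp (-γ * X / δ t) * c ∧
      (max (max A B) C = 0 ↔ min (min a b) c = 0) := by
  intro t S y X hS0
  dsimp only
  set E : ℝ := Real.exp (r * (T - t)) with hE
  have hEpos : (0:ℝ) < E := Real.exp_pos _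
  have hδt : δ t = E⁻¹ := by
    rw [hδ, hE, show -r * (T - t) = -(r * (T - t)) by ring, Real.exp_neg]
  set e : ℝ := Real.exp (-γ * X / δ t) with he
  have hepos : (0:ℝ) < e := Real.exp_pos _
  have hee : Real.exp (-γ * X * E) = e := by
    rw [he, hδt, div_eq_mul_inv, inv_inv]
  -- derivative in y
  have Hy : HasDerivAt (fun y' => U t S y' X)
      (-(e * deriv (fun y' => Q t y' S) y)) y := by
    have hfy : (fun y' => U t S y' X) = fun y' => 1 - e * Q t y' S :=
      funext fun y' => hU t S y' X
    rw [hfy]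
    exact ((((hQy t S) y).hasDerivAt.const_mul e).const_sub 1)
  -- derivative in X
  have HX : HasDerivAt (fun X' => U t S y X')
      (-(e * (-γ / δ t) * Q t y S)) X := by
    have hfX : (fun X' => U t S y X') = fun X' => 1 - Real.exp (-γ / δ t * X') * Q t y S :=
      funext fun X' => by
        rw [hU t S y X', show -γ * X' / δ t = -γ / δ t * X' by ring]
    rw [hfX]
    have h0 : HasDerivAt (fun X' : ℝ => Real.exp (-γ / δ t * X'))
        (Real.exp (-γ / δ t * X) * (-γ / δ t)) X := by
      simpa using (((hasDerivAt_id X).const_mul (-γ / δ t)).exp)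
    have h1 := (h0.mul_const (Q t y S)).const_sub 1
    have hxe : Real.exp (-γ / δ t * X) = e := by
      rw [he, show -γ / δ t * X = -γ * X / δ t by ring]
    rw [hxe] at h1
    convert h1 using 1
  -- derivative in S (at any point s)
  have HS : ∀ s, HasDerivAt (fun S' => U t S' y X)
      (-(e * deriv (fun S' => Q t y S') s)) s := by
    intro s
    have hfS : (fun S' => U t S' y X) = fun S' => 1 - e * Q t y S' :=
      funext fun S' => hU t S' y X
    rw [hfS]
    exact ((((hQS t y) s).hasDerivAt.const_mul e).const_sub 1)
  have hDS : (deriv fun S' => U t S' y X) = fun s => -(e * deriv (fun S' => Q t y S') s) :=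
    funext fun s => (HS s).deriv
  -- second derivative in S
  have HSS : deriv (deriv fun S' => U t S' y X) S
      = -(e * deriv (deriv fun S' => Q t y S') S) := by
    rw [hDS]
    exact ((((hQSS t y) S).hasDerivAt.const_mul e).neg).deriv
  -- derivative in t
  have Ht : HasDerivAt (fun t' => U t' S y X)
      (-((Real.exp (-γ * X * E) * (-γ * X * (E * (r * -1)))) * Q t y S
        + Real.exp (-γ * X * E) * deriv (fun t' => Q t' y S) t)) t := by
    have hft : (fun t' => U t' S y X)
        = fun t' => 1 - Real.exp (-γ * X * Real.exp (r * (T - t'))) * Q t' y S :=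
      funext fun t' => by
        rw [hU t' S y X, hδ, show -r * (T - t') = -(r * (T - t')) by ring, Real.exp_neg,
          div_eq_mul_inv, inv_inv]
    rw [hft]
    have hg : HasDerivAt (fun t' : ℝ => -γ * X * Real.exp (r * (T - t')))
        (-γ * X * (E * (r * -1))) t := by
      have h0 : HasDerivAt (fun t' : ℝ => r * (T - t')) (r * -1) t := by
        simpa using (((hasDerivAt_id t).const_sub T).const_mul r)
      exact (h0.exp).const_mul (-γ * X)
    exact (hg.exp.mul ((hQt y S) t).hasDerivAt).const_sub 1
  rw [hee] at Ht
  -- plug in values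
  rw [Hy.deriv, HX.deriv, Ht.deriv, (HS S).deriv, HSS]
  have hδne : δ t ≠ 0 := by rw [hδt]; positivity
  have hA : -(e * deriv (fun y' => Q t y' S) y) - (1 + lam) * S * -(e * (-γ / δ t) * Q t y S)
      = -e * (deriv (fun y' => Q t y' S) y + γ * (1 + lam) * S * Q t y S / δ t) := by
    field_simp; ring
  have hB : - -(e * deriv (fun y' => Q t y' S) y) + (1 - lam) * S * -(e * (-γ / δ t) * Q t y S)
      = -e * (-deriv (fun y' => Q t y' S) y - γ * (1 - lam) * S * Q t y S / δ t) := by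
    field_simp; ring
  have hC : - -(e * (-γ * X * (E * (r * -1))) * Q t y S + e * deriv (fun t' => Q t' y S) t)
        - μ * S * -(e * deriv (fun S' => Q t y S') S)
        - σ ^ 2 * S ^ 2 / 2 * -(e * deriv (deriv fun S' => Q t y S') S)
        - r * X * -(e * (-γ / δ t) * Q t y S)
      = -e * (-deriv (fun t' => Q t' y S) t - μ * S * deriv (fun S' => Q t y S') S
          - σ ^ 2 * S ^ 2 / 2 * deriv (deriv fun S' => Q t y S') S) := by
    rw [hδt]
    field_simp
    ring
  refine ⟨hA, hB, hC, ?_⟩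
  rw [hA, hB, hC]
  have hne : -e < 0 := by linarith
  rw [max_mul_min_of_neg hne, max_mul_min_of_neg hne, mul_eq_zero]
  constructor
  · rintro (h | h)
    · exact absurd h (by simp [he, Real.exp_ne_zero])
    · exact h
  · exact fun h => Or.inr h
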